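/- arXiv:1406.3215 — 2 statements merged into one kernel-verified Lean document; each statement's English description precedes it below -/
import Mathlib

section
/- Let (X,d) be a complete uniformly ∞-convex metric space and let (x_n) be a bounded sequence converging weakly sequentially to x. Then liminf_{n→∞} d(x,x_n) < liminf_{n→∞} d(y,x_n) for every y ∈ X with y ≠ x (Opial property). -/
open Filter Topology Metric Set MeasureTheory
open scoped ENNReal

section Defs

variable (X : Type) [MetricSpace X]

/-- `m` is a midpoint of `x` and `y`. -/
def IsMidpoint {X : Type} [MetricSpace X] (x y m : X) : Prop :=
  dist x m = dist x y / 2 ∧ dist y m = dist x y / 2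

/-- `(X,d)` admits midpoints. -/
def AdmitsMidpoints : Prop := ∀ x y : X, ∃ m, IsMidpoint x y m

/-- The `p`-mean of two nonnegative reals, `p ∈ [1,∞]`. -/
noncomputable def pMean (p : ℝ≥0∞) (a b : ℝ) : ℝ :=
  if p = ∞ then max a b else ((a ^ p.toReal + b ^ p.toReal) / 2) ^ (1 / p.toReal)

/-- `p`-convexity. -/
def PConvex (p : ℝ≥0∞) : Prop :=
  AdmitsMidpoints X ∧ ∀ x y z m : X, IsMidpoint x y m →
    dist m z ≤ pMean p (dist x z) (dist y z)

/-- strict `p`-convexity. -/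
def StrictlyPConvex (p : ℝ≥0∞) : Prop :=
  AdmitsMidpoints X ∧ ∀ x y z m : X, IsMidpoint x y m →
    (if p = 1 then |dist x z - dist y z| < dist x y else x ≠ y) →
    dist m z < pMean p (dist x z) (dist y z)

/-- uniform `p`-convexity. -/
def UniformlyPConvex (p : ℝ≥0∞) : Prop :=
  AdmitsMidpoints X ∧ ∀ ε : ℝ, 0 < ε → ∃ ρ : ℝ, ρ ∈ Set.Ioo (0:ℝ) 1 ∧
    ∀ x y z m : X, IsMidpoint x y m →
      (if p = 1 then |dist x z - dist y z| + ε * pMean 1 (dist x z) (dist y z) < dist x y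
        else ε * pMean p (dist x z) (dist y z) < dist x y) →
      dist m z ≤ (1 - ρ) * pMean p (dist x z) (dist y z)

/-- Busemann non-positive curvature condition. -/
def Busemann : Prop :=
  AdmitsMidpoints X ∧ ∀ x₀ x₁ y₀ y₁ xm ym : X,
    IsMidpoint x₀ x₁ xm → IsMidpoint y₀ y₁ ym →
      dist xm ym ≤ (dist x₀ y₀ + dist x₁ y₁) / 2

/-- `γ` (restricted to `[0,1]`) is a geodesic from `x` to `y`. -/
def IsGeodesic {X : Type} [MetricSpace X] (γ : ℝ → X) (x y : X) : Prop :=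
  γ 0 = x ∧ γ 1 = y ∧ ∀ s ∈ Set.Icc (0:ℝ) 1, ∀ t ∈ Set.Icc (0:ℝ) 1,
    dist (γ s) (γ t) = |s - t| * dist x y

/-- A subset is (geodesically) convex if it contains all geodesics between its points. -/
def GConvex {X : Type} [MetricSpace X] (C : Set X) : Prop :=
  ∀ x ∈ C, ∀ y ∈ C, ∀ γ : ℝ → X, IsGeodesic γ x y → ∀ t ∈ Set.Icc (0:ℝ) 1, γ t ∈ C

/-- The convex hull: the smallest convex set containing `A`. -/
def gConvexHull {X : Type} [MetricSpace X] (A : Set X) : Set X :=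
  ⋂₀ {C : Set X | GConvex C ∧ A ⊆ C}

/-- `∞`-convexity. -/
def InftyConvex : Prop :=
  AdmitsMidpoints X ∧ ∀ x y z m : X, IsMidpoint x y m →
    dist m z ≤ max (dist x z) (dist y z)

/-- strict `∞`-convexity. -/
def StrictlyInftyConvex : Prop :=
  AdmitsMidpoints X ∧ ∀ x y z m : X, IsMidpoint x y m → x ≠ y →
    dist m z < max (dist x z) (dist y z)

/-- uniform `∞`-convexity. -/
def UniformlyInftyConvex : Prop :=
  AdmitsMidpoints X ∧ ∀ ε : ℝ, 0 < ε → ∃ ρ : ℝ, ρ ∈ Set.Ioo (0:ℝ) 1 ∧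
    ∀ x y z m : X, IsMidpoint x y m →
      ε * max (dist x z) (dist y z) < dist x y →
      dist m z ≤ (1 - ρ) * max (dist x z) (dist y z)

/-- `ρ` works as a modulus of nearly uniform convexity for the parameters `ε`, `R`:
for every infinite `ε`-separated family in a ball of radius `r ≤ R` around `y`, the ball
`B_{(1-ρ)r}(y)` intersects the closed convex hull of the family. -/
def NUCModulus (ε R ρ : ℝ) : Prop :=
  ∀ (ι : Type) [Infinite ι], ∀ (x : ι → X) (y : X) (r : ℝ), r ≤ R →
    (∀ i j : ι, i ≠ j → ε ≤ dist (x i) (x j)) → (∀ i, dist (x i) y ≤ r) →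
    (Metric.closedBall y ((1 - ρ) * r) ∩ closure (gConvexHull (Set.range x))).Nonempty

/-- Nearly uniform convexity. -/
def NearlyUniformlyConvex : Prop :=
  InftyConvex X ∧ ∀ R : ℝ, 0 < R → ∀ ε : ℝ, 0 < ε → ∃ ρ : ℝ, 0 < ρ ∧ NUCModulus X ε R ρ

/-- Reflexivity: every decreasing directed family of nonempty bounded closed convex sets
has nonempty intersection. -/
def MetricReflexive : Prop :=
  ∀ (I : Type) [Nonempty I] [Preorder I] [IsDirected I (· ≤ ·)], ∀ C : I → Set X,
    (∀ i, (C i).Nonempty) → (∀ i, Bornology.IsBounded (C i)) → (∀ i, IsClosed (C i)) →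
    (∀ i, GConvex (C i)) → (∀ i j : I, j ≤ i → C i ⊆ C j) → (⋂ i, C i).Nonempty

/-- The co-convex topology: the weakest topology containing all complements of closed
convex sets. -/
def coConvexTopology : TopologicalSpace X :=
  TopologicalSpace.generateFrom {U : Set X | ∃ C : Set X, IsClosed C ∧ GConvex C ∧ U = Cᶜ}

/-- The set of limit points of the sequence `x` in the co-convex topology. -/
def coLim {X : Type} [MetricSpace X] (x : ℕ → X) : Set X :=
  {a : X | Filter.Tendsto x Filter.atTop (@nhds X (coConvexTopology X) a)}

/-- Countable reflexivity. -/
def CountableReflexive : Prop :=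
  MetricReflexive X ∧ ∀ x : ℕ → X, (coLim x).Nonempty →
    ∃ φ : ℕ → ℕ, StrictMono φ ∧
      coLim x = ⋂ m : ℕ, closure (gConvexHull ((fun n => x (φ n)) '' Set.Ici m))

/-- Quasi-convexity: all sublevel sets are convex. -/
def GQuasiConvex {X : Type} [MetricSpace X] (f : X → ℝ) : Prop :=
  ∀ c : ℝ, GConvex {x : X | f x ≤ c}

/-- Quasi-monotonicity: both quasi-convex and quasi-concave. -/
def GQuasiMonotone {X : Type} [MetricSpace X] (f : X → ℝ) : Prop :=
  GQuasiConvex f ∧ GQuasiConvex (fun x => -f x)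

/-- The `p`-mean for real `p ∈ [1,∞)`. -/
noncomputable def pMeanR (p a b : ℝ) : ℝ := ((a ^ p + b ^ p) / 2) ^ (1 / p)

/-- `p`-convexity for real `p`. -/
def PConvexR (p : ℝ) : Prop :=
  AdmitsMidpoints X ∧ ∀ x y z m : X, IsMidpoint x y m →
    dist m z ≤ pMeanR p (dist x z) (dist y z)

/-- strict `p`-convexity for real `p`. -/
def StrictlyPConvexR (p : ℝ) : Prop :=
  AdmitsMidpoints X ∧ ∀ x y z m : X, IsMidpoint x y m →
    (if p = 1 then |dist x z - dist y z| < dist x y else x ≠ y) →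
    dist m z < pMeanR p (dist x z) (dist y z)

/-- uniform `p`-convexity for real `p`. -/
def UniformlyPConvexR (p : ℝ) : Prop :=
  AdmitsMidpoints X ∧ ∀ ε : ℝ, 0 < ε → ∃ ρ : ℝ, ρ ∈ Set.Ioo (0:ℝ) 1 ∧
    ∀ x y z m : X, IsMidpoint x y m →
      ε * pMeanR p (dist x z) (dist y z) < dist x y →
      dist m z ≤ (1 - ρ) * pMeanR p (dist x z) (dist y z)

/-- `ω(z,(x_n)) = limsup_n d(z,x_n)`. -/
noncomputable def asymRadius {X : Type} [MetricSpace X] (x : ℕ → X) (z : X) : ℝ :=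
  Filter.limsup (fun n => dist z (x n)) Filter.atTop

/-- `a` is the (unique) asymptotic center of the sequence `x`. -/
def IsAsymptoticCenter {X : Type} [MetricSpace X] (x : ℕ → X) (a : X) : Prop :=
  (∀ z : X, asymRadius x a ≤ asymRadius x z) ∧
  ∀ b : X, (∀ z : X, asymRadius x b ≤ asymRadius x z) → b = a

/-- Weak sequential convergence: `a` is the asymptotic center of every subsequence. -/
def WeakSeqConv {X : Type} [MetricSpace X] (x : ℕ → X) (a : X) : Prop :=
  ∀ φ : ℕ → ℕ, StrictMono φ → IsAsymptoticCenter (fun n => x (φ n)) a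

end Defs
/-- Opial property: if `x_n →ʷ x` then
`liminf d(x,x_n) < liminf d(y,x_n)` for every `y ≠ x`. -/
theorem opial_property (X : Type) [MetricSpace X] [CompleteSpace X]
    (h : UniformlyInftyConvex X) (x : ℕ → X) (hb : Bornology.IsBounded (Set.range x))
    (a : X) (hw : WeakSeqConv x a) (y : X) (hy : y ≠ a) :
    Filter.liminf (fun n => dist a (x n)) Filter.atTop <
      Filter.liminf (fun n => dist y (x n)) Filter.atTop := by
  
  by_contra hlt
  push_neg at hlt
  set Ly := Filter.liminf (fun n => dist y (x n)) Filter.atTop with hLy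
  set La := Filter.liminf (fun n => dist a (x n)) Filter.atTop with hLa
  obtain ⟨C, hC⟩ := Metric.isBounded_iff.1 hb
  have hbdd : ∀ z : X, ∀ n, dist z (x n) ≤ dist z (x 0) + C := fun z n =>
    (dist_triangle z (x 0) (x n)).trans (by
      have := hC (mem_range_self 0) (mem_range_self n); linarith)
  have hBU : ∀ (z : X) (F : Filter ℕ), F.IsBoundedUnder (· ≤ ·) (fun n => dist z (x n)) :=
    fun z F => ⟨dist z (x 0) + C, eventually_map.2 (Eventually.of_forall (hbdd z))⟩
  have hBL : ∀ (z : X) (F : Filter ℕ), F.IsBoundedUnder (· ≥ ·) (fun n => dist z (x n)) :=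
    fun z F => ⟨0, eventually_map.2 (Eventually.of_forall fun n => dist_nonneg)⟩
  -- extract subsequence with d(y, x (φ k)) < Ly + 1/(k+1)
  have hfreq : ∀ k : ℕ, ∃ᶠ n in atTop, dist y (x n) < Ly + 1 / (k + 1) := by
    intro k
    apply frequently_lt_of_liminf_lt ((hBU y atTop).isCoboundedUnder_ge)
    have : (0:ℝ) < 1 / (k + 1) := by positivity
    linarith
  obtain ⟨φ, hφ, hφk⟩ := extraction_forall_of_frequently hfreq
  have hAC := hw φ hφ
  -- asymRadius of y along φ is ≤ Ly
  have hymap : asymRadius (fun n => x (φ n)) y ≤ Ly := by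
    apply le_of_forall_pos_le_add
    intro ε hε
    obtain ⟨K, hK⟩ := exists_nat_one_div_lt hε
    apply limsup_le_of_le (Filter.IsBoundedUnder.isCoboundedUnder_le (⟨0, eventually_map.2 (Eventually.of_forall fun n => dist_nonneg)⟩ : Filter.IsBoundedUnder (· ≥ ·) atTop fun k => dist y (x (φ k))))
    filter_upwards [eventually_ge_atTop K] with k hk
    have h1 : (1:ℝ) / (k + 1) ≤ 1 / (K + 1) := by
      apply one_div_le_one_div_of_le (by positivity)
      linarith [(Nat.cast_le (α := ℝ)).2 hk]
    have := hφk k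
    have := hK.le
    linarith
  -- asymRadius of a along φ is ≥ La
  have hamap : La ≤ asymRadius (fun n => x (φ n)) a := by
    have h1 : La ≤ Filter.liminf (fun n => dist a (x (φ n))) atTop := by
      have hmap : Filter.map φ atTop ≤ atTop := (hφ.tendsto_atTop)
      have := liminf_le_liminf_of_le hmap (hBL a atTop)
        ((hBU a (Filter.map φ atTop)).isCoboundedUnder_ge) (u := fun n => dist a (x n))
      rwa [show Filter.liminf (fun n => dist a (x n)) (Filter.map φ atTop)
          = Filter.liminf (fun n => dist a (x (φ n))) atTop from by
        simp [Filter.liminf, Filter.map_map]; rfl] at this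
    refine h1.trans (liminf_le_limsup ?_ ?_)
    · exact ⟨dist a (x 0) + C, eventually_map.2 (Eventually.of_forall fun n => hbdd a (φ n))⟩
    · exact ⟨0, eventually_map.2 (Eventually.of_forall fun n => dist_nonneg)⟩
  have key : ∀ z : X, asymRadius (fun n => x (φ n)) y ≤ asymRadius (fun n => x (φ n)) z :=
    fun z => le_trans (hymap.trans (hlt.trans hamap)) (hAC.1 z)
  exact hy (hAC.2 y key)
end

section
/- Let p ∈ [1,∞) and let (X,d) be a complete, p-convex, reflexive metric space. Then every Borel probability measure μ on X with finite p-th moment (∫ d(x,x_0)^p dμ(x) < ∞ for some x_0) has a p-barycenter, i.e. the function y ↦ ∫ d(x,y)^p dμ(x) attains its infimum over X. If moreover p ∈ (1,∞) and (X,d) is strictly p-convex, then the p-barycenter is unique. -/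
open Filter Topology Metric Set MeasureTheory
open scoped ENNReal

/-!
`F y = ∫ d(x,y)^p dμ` is finite and continuous as soon as it is finite at one point, and its
sublevel sets are bounded because a ball of positive mass keeps `F` large far away. By
`p`-convexity `F` is midpoint convex, so its sublevel sets are closed and midpoint closed, hence
convex: along a geodesic, the parameters landing in such a set form a closed midpoint-closed subset
of `[0,1]` containing both endpoints. Reflexivity applied to the decreasing sublevel sets
`{F ≤ inf F + 1/(k+1)}` yields a minimizer. Under strict `p`-convexity a midpoint of two distinct
minimizers would have a strictly smaller value.
-/

theorem Set.ordConnected_of_isClosed_of_midpoint_mem {S : Set ℝ} (hS : IsClosed S)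
    (hmid : ∀ s ∈ S, ∀ t ∈ S, (s + t) / 2 ∈ S) : S.OrdConnected := by
  refine ⟨fun a ha b hb t ht => ?_⟩
  -- `s` and `u` are the points of `S` closest to `t` from below and from above; their midpoint
  -- lies in `S` between them, which forces `s = u = t`.
  have hlo : (S ∩ Icc a t).Nonempty := ⟨a, ha, left_mem_Icc.2 ht.1⟩
  have hhi : (S ∩ Icc t b).Nonempty := ⟨b, hb, right_mem_Icc.2 ht.2⟩
  have hlo_bdd : BddAbove (S ∩ Icc a t) := bddAbove_Icc.mono inter_subset_right
  have hhi_bdd : BddBelow (S ∩ Icc t b) := bddBelow_Icc.mono inter_subset_right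
  set s := sSup (S ∩ Icc a t)
  set u := sInf (S ∩ Icc t b)
  obtain ⟨hsS, has, hst⟩ := (hS.inter isClosed_Icc).csSup_mem hlo hlo_bdd
  obtain ⟨huS, htu, hub⟩ := (hS.inter isClosed_Icc).csInf_mem hhi hhi_bdd
  rcases le_total ((s + u) / 2) t with hm | hm
  · have : (s + u) / 2 ≤ s := le_csSup hlo_bdd ⟨hmid s hsS u huS, by linarith, hm⟩
    rwa [show t = s by linarith]
  · have : u ≤ (s + u) / 2 := csInf_le hhi_bdd ⟨hmid s hsS u huS, hm, by linarith⟩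
    rwa [show t = u by linarith]

section Geodesic

variable {X : Type} [MetricSpace X] {γ : ℝ → X} {x y : X}

theorem IsGeodesic.continuousOn (hγ : IsGeodesic γ x y) : ContinuousOn γ (Icc 0 1) :=
  LipschitzOnWith.continuousOn (K := Real.toNNReal (dist x y)) <|
    LipschitzOnWith.of_dist_le_mul fun s hs t ht => by
      rw [hγ.2.2 s hs t ht, Real.coe_toNNReal _ dist_nonneg, Real.dist_eq, mul_comm]

theorem IsGeodesic.isMidpoint (hγ : IsGeodesic γ x y) {s t : ℝ} (hs : s ∈ Icc (0 : ℝ) 1)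
    (ht : t ∈ Icc (0 : ℝ) 1) : IsMidpoint (γ s) (γ t) (γ ((s + t) / 2)) := by
  have hm : (s + t) / 2 ∈ Icc (0 : ℝ) 1 := ⟨by linarith [hs.1, ht.1], by linarith [hs.2, ht.2]⟩
  have hd := hγ.2.2
  constructor
  · rw [hd s hs _ hm, hd s hs t ht, show s - (s + t) / 2 = (s - t) / 2 by ring, abs_div,
      abs_two, div_mul_eq_mul_div]
  · rw [hd t ht _ hm, hd s hs t ht, show t - (s + t) / 2 = (t - s) / 2 by ring, abs_div,
      abs_two, abs_sub_comm, div_mul_eq_mul_div]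

theorem gConvex_of_isClosed_of_midpoint_mem {C : Set X} (hC : IsClosed C)
    (hmid : ∀ a ∈ C, ∀ b ∈ C, ∀ m, IsMidpoint a b m → m ∈ C) : GConvex C := by
  intro x hx y hy γ hγ
  have hS : (Icc (0 : ℝ) 1 ∩ γ ⁻¹' C).OrdConnected := by
    refine Set.ordConnected_of_isClosed_of_midpoint_mem
      (hγ.continuousOn.preimage_isClosed_of_isClosed isClosed_Icc hC) ?_
    rintro s ⟨hs, hsC⟩ t ⟨ht, htC⟩
    exact ⟨⟨by linarith [hs.1, ht.1], by linarith [hs.2, ht.2]⟩,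
      hmid _ hsC _ htC _ (hγ.isMidpoint hs ht)⟩
  intro t ht
  exact (hS.out ⟨left_mem_Icc.2 zero_le_one, by rwa [Set.mem_preimage, hγ.1]⟩
    ⟨right_mem_Icc.2 zero_le_one, by rwa [Set.mem_preimage, hγ.2.1]⟩ ht).2

theorem gQuasiConvex_of_midpoint_le_max {F : X → ℝ} (hF : LowerSemicontinuous F)
    (hmid : ∀ a b m : X, IsMidpoint a b m → F m ≤ max (F a) (F b)) : GQuasiConvex F :=
  fun c => gConvex_of_isClosed_of_midpoint_mem (hF.isClosed_preimage c)
    fun a ha b hb m hm => (hmid a b m hm).trans (max_le ha hb)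

end Geodesic

theorem MetricReflexive.exists_forall_le {X : Type} [MetricSpace X] [Nonempty X]
    (hrefl : MetricReflexive X) {F : X → ℝ} (hF : LowerSemicontinuous F) (hq : GQuasiConvex F)
    (hbdd : ∀ c, Bornology.IsBounded {y | F y ≤ c}) (hbelow : BddBelow (range F)) :
    ∃ b, ∀ y, F b ≤ F y := by
  set C : ℕ → Set X := fun k => {y | F y ≤ (⨅ z, F z) + 1 / (k + 1)}
  have hC_ne : ∀ k, (C k).Nonempty := fun k =>
    (exists_lt_of_ciInf_lt (lt_add_of_pos_right (⨅ z, F z) (Nat.one_div_pos_of_nat (n := k)))).imp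
      fun _ => le_of_lt
  have hC_anti : ∀ i j : ℕ, j ≤ i → C i ⊆ C j := fun i j hij y (hy : F y ≤ _) =>
    hy.trans (add_le_add_right (Nat.one_div_le_one_div hij) _)
  obtain ⟨b, hb⟩ := hrefl ℕ C hC_ne (fun k => hbdd _) (fun k => hF.isClosed_preimage _)
    (fun k => hq _) hC_anti
  have hFb : F b ≤ ⨅ z, F z := by
    have hlim := tendsto_one_div_add_atTop_nhds_zero_nat.const_add (⨅ z, F z)
    rw [add_zero] at hlim
    exact ge_of_tendsto' hlim fun k => mem_iInter.1 hb k
  exact ⟨b, fun y => hFb.trans (ciInf_le hbelow y)⟩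

theorem Real.rpow_add_le_two_rpow_mul_add {p a b : ℝ} (hp : 0 ≤ p) (ha : 0 ≤ a) (hb : 0 ≤ b) :
    (a + b) ^ p ≤ 2 ^ p * (a ^ p + b ^ p) := by
  have hmax : max a b ^ p ≤ a ^ p + b ^ p := by
    rcases le_total a b with h | h
    · rw [max_eq_right h]; linarith [Real.rpow_nonneg ha p]
    · rw [max_eq_left h]; linarith [Real.rpow_nonneg hb p]
  calc (a + b) ^ p ≤ (2 * max a b) ^ p :=
        Real.rpow_le_rpow (by positivity) (by linarith [le_max_left a b, le_max_right a b]) hp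
    _ = 2 ^ p * max a b ^ p := Real.mul_rpow zero_le_two (le_max_of_le_left ha)
    _ ≤ 2 ^ p * (a ^ p + b ^ p) := by gcongr

theorem pMeanR_rpow {p a b : ℝ} (hp : p ≠ 0) (ha : 0 ≤ a) (hb : 0 ≤ b) :
    pMeanR p a b ^ p = (a ^ p + b ^ p) / 2 := by
  rw [pMeanR, one_div, Real.rpow_inv_rpow (by positivity) hp]

section RpowDist

variable {X : Type} [MetricSpace X] {p : ℝ} {x y m : X}

theorem PConvexR.rpow_dist_le (hconv : PConvexR X p) (hp : 0 < p) (hm : IsMidpoint x y m)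
    (z : X) : dist m z ^ p ≤ (dist x z ^ p + dist y z ^ p) / 2 := by
  rw [← pMeanR_rpow hp.ne' dist_nonneg dist_nonneg]
  exact Real.rpow_le_rpow dist_nonneg (hconv.2 x y z m hm) hp.le

theorem StrictlyPConvexR.rpow_dist_lt (hconv : StrictlyPConvexR X p) (hp : 1 < p)
    (hm : IsMidpoint x y m) (hxy : x ≠ y) (z : X) :
    dist m z ^ p < (dist x z ^ p + dist y z ^ p) / 2 := by
  have hp₀ : 0 < p := zero_lt_one.trans hp
  rw [← pMeanR_rpow hp₀.ne' dist_nonneg dist_nonneg]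
  exact Real.rpow_lt_rpow dist_nonneg (hconv.2 x y z m hm (by rwa [if_neg hp.ne'])) hp₀

theorem continuous_rpow_dist (hp : 0 ≤ p) (y : X) : Continuous fun x : X => dist x y ^ p :=
  (continuous_id.dist continuous_const).rpow_const fun _ => Or.inr hp

end RpowDist

noncomputable def pMoment {X : Type} [MetricSpace X] [MeasurableSpace X] (μ : Measure X)
    (p : ℝ) (y : X) : ℝ :=
  ∫ x, dist x y ^ p ∂μ

section PMoment

variable {X : Type} [MetricSpace X] [MeasurableSpace X] [BorelSpace X] {μ : Measure X}
  [IsFiniteMeasure μ] {p : ℝ} {x₀ : X}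

theorem integrable_rpow_dist (hp : 0 ≤ p) (h₀ : Integrable (fun x => dist x x₀ ^ p) μ) (y : X) :
    Integrable (fun x => dist x y ^ p) μ := by
  refine Integrable.mono' ((h₀.add (integrable_const (dist x₀ y ^ p))).const_mul (2 ^ p))
    (continuous_rpow_dist hp y).aestronglyMeasurable (Eventually.of_forall fun x => ?_)
  rw [Real.norm_of_nonneg (by positivity)]
  exact (Real.rpow_le_rpow dist_nonneg (dist_triangle x x₀ y) hp).trans
    (Real.rpow_add_le_two_rpow_mul_add hp dist_nonneg dist_nonneg)

theorem continuous_pMoment (hp : 0 ≤ p) (h₀ : Integrable (fun x => dist x x₀ ^ p) μ) :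
    Continuous (pMoment μ p) := by
  refine continuous_iff_continuousAt.2 fun y₀ => continuousAt_of_dominated
    (bound := fun x => 2 ^ p * (dist x y₀ ^ p + 1))
    (Eventually.of_forall fun y => (continuous_rpow_dist hp y).aestronglyMeasurable) ?_
    (((integrable_rpow_dist hp h₀ y₀).add (integrable_const 1)).const_mul _)
    (Eventually.of_forall fun x =>
      ((continuous_const.dist continuous_id).rpow_const fun _ => Or.inr hp).continuousAt)
  filter_upwards [ball_mem_nhds y₀ one_pos] with y hy
  refine Eventually.of_forall fun x => ?_
  rw [Real.norm_of_nonneg (by positivity)]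
  calc dist x y ^ p ≤ (dist x y₀ + dist y₀ y) ^ p :=
        Real.rpow_le_rpow dist_nonneg (dist_triangle x y₀ y) hp
    _ ≤ 2 ^ p * (dist x y₀ ^ p + dist y₀ y ^ p) :=
        Real.rpow_add_le_two_rpow_mul_add hp dist_nonneg dist_nonneg
    _ ≤ 2 ^ p * (dist x y₀ ^ p + 1) := by
        gcongr
        exact Real.rpow_le_one dist_nonneg (mem_ball'.1 hy).le hp

theorem rpow_sub_mul_measureReal_closedBall_le_pMoment (hp : 0 ≤ p)
    (h₀ : Integrable (fun x => dist x x₀ ^ p) μ) {r : ℝ} {y : X} (hr : r ≤ dist y x₀) :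
    (dist y x₀ - r) ^ p * μ.real (closedBall x₀ r) ≤ pMoment μ p y := by
  have hint := integrable_rpow_dist hp h₀ y
  refine (setIntegral_ge_of_const_le_real measurableSet_closedBall (measure_ne_top μ _)
    (fun x hx => ?_) hint.integrableOn).trans
    (setIntegral_le_integral hint (Eventually.of_forall fun x => by positivity))
  refine Real.rpow_le_rpow (by linarith) ?_ hp
  linarith [dist_triangle y x x₀, mem_closedBall.1 hx, dist_comm x y]

theorem isBounded_setOf_pMoment_le [NeZero μ] (hp : 0 < p)
    (h₀ : Integrable (fun x => dist x x₀ ^ p) μ) (c : ℝ) :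
    Bornology.IsBounded {y | pMoment μ p y ≤ c} := by
  obtain ⟨n, hn⟩ : ∃ n : ℕ, 0 < μ.real (closedBall x₀ n) := by
    by_contra! h
    have hnull : μ (⋃ n : ℕ, closedBall x₀ n) = 0 := measure_iUnion_null fun n =>
      (measureReal_eq_zero_iff (measure_ne_top μ _)).1 ((h n).antisymm measureReal_nonneg)
    rw [iUnion_closedBall_nat, Measure.measure_univ_eq_zero] at hnull
    exact NeZero.ne μ hnull
  -- beyond radius `n + R` the mass of `closedBall x₀ n` alone pushes the moment above `|c|`
  set R := (|c| / μ.real (closedBall x₀ n)) ^ p⁻¹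
  refine isBounded_closedBall (x := x₀) (r := n + R) |>.subset fun y (hy : pMoment μ p y ≤ c) => ?_
  by_contra hfar
  rw [mem_closedBall, not_le] at hfar
  have hR₀ : 0 ≤ R := by positivity
  have hR : R ^ p < (dist y x₀ - n) ^ p := Real.rpow_lt_rpow hR₀ (by linarith) hp
  rw [Real.rpow_inv_rpow (by positivity) hp.ne', div_lt_iff₀ hn] at hR
  linarith [le_abs_self c,
    rpow_sub_mul_measureReal_closedBall_le_pMoment hp.le h₀ (y := y) (r := n) (by linarith)]

theorem pMoment_midpoint_le (hconv : PConvexR X p) (hp : 0 < p)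
    (h₀ : Integrable (fun x => dist x x₀ ^ p) μ) {a b m : X} (hm : IsMidpoint a b m) :
    pMoment μ p m ≤ (pMoment μ p a + pMoment μ p b) / 2 := by
  have ha := integrable_rpow_dist hp.le h₀ a
  have hb := integrable_rpow_dist hp.le h₀ b
  rw [pMoment, pMoment, pMoment, ← integral_add ha hb, ← integral_div]
  refine integral_mono (integrable_rpow_dist hp.le h₀ m) ((ha.add hb).div_const 2) fun x => ?_
  simpa only [dist_comm x] using hconv.rpow_dist_le hp hm x

theorem pMoment_midpoint_lt [NeZero μ] (hconv : StrictlyPConvexR X p) (hp : 1 < p)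
    (h₀ : Integrable (fun x => dist x x₀ ^ p) μ) {a b m : X} (hab : a ≠ b)
    (hm : IsMidpoint a b m) :
    pMoment μ p m < (pMoment μ p a + pMoment μ p b) / 2 := by
  have hp₀ : 0 ≤ p := by linarith
  have ha := integrable_rpow_dist hp₀ h₀ a
  have hb := integrable_rpow_dist hp₀ h₀ b
  have hg : Integrable (fun x => (dist x a ^ p + dist x b ^ p) / 2) μ := (ha.add hb).div_const 2
  have hgap : ∀ x, dist x m ^ p < (dist x a ^ p + dist x b ^ p) / 2 := fun x => by
    simpa only [dist_comm x] using hconv.rpow_dist_lt hp hm hab x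
  have hpos : 0 < ∫ x, ((dist x a ^ p + dist x b ^ p) / 2 - dist x m ^ p) ∂μ := by
    rw [integral_pos_iff_support_of_nonneg (fun x => (sub_pos.2 (hgap x)).le)
      (hg.sub (integrable_rpow_dist hp₀ h₀ m)),
      Function.support_eq_univ fun x => (sub_pos.2 (hgap x)).ne', Measure.measure_univ_pos]
    exact NeZero.ne μ
  rw [integral_sub hg (integrable_rpow_dist hp₀ h₀ m), integral_div, integral_add ha hb] at hpos
  unfold pMoment
  linarith

end PMoment

theorem eq_of_forall_le_of_midpoint_lt {X : Type} [MetricSpace X] (hX : AdmitsMidpoints X)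
    {F : X → ℝ} (hF : ∀ a b m : X, a ≠ b → IsMidpoint a b m → F m < (F a + F b) / 2) {a b : X}
    (ha : ∀ y, F a ≤ F y) (hb : ∀ y, F b ≤ F y) : a = b := by
  by_contra hab
  obtain ⟨m, hm⟩ := hX a b
  linarith [hF a b m hab hm, ha m, ha b, hb a]

theorem pBarycenter_exists_general (X : Type) [MetricSpace X]
    [MeasurableSpace X] [BorelSpace X] (p : ℝ) (hp : 1 ≤ p)
    (hconv : PConvexR X p) (hrefl : MetricReflexive X)
    (μ : Measure X) [IsProbabilityMeasure μ]
    (hmom : ∃ x₀ : X, Integrable (fun x => dist x x₀ ^ p) μ) :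
    (∃ b : X, ∀ y : X, ∫ x, dist x b ^ p ∂μ ≤ ∫ x, dist x y ^ p ∂μ) ∧
    ((1 < p ∧ StrictlyPConvexR X p) →
      ∃! b : X, ∀ y : X, ∫ x, dist x b ^ p ∂μ ≤ ∫ x, dist x y ^ p ∂μ) := by
  obtain ⟨x₀, h₀⟩ := hmom
  have : Nonempty X := ⟨x₀⟩
  have hp₀ : 0 < p := by linarith
  have hquasi : GQuasiConvex (pMoment μ p) :=
    gQuasiConvex_of_midpoint_le_max (continuous_pMoment hp₀.le h₀).lowerSemicontinuous
      fun a b m hm => (pMoment_midpoint_le hconv hp₀ h₀ hm).trans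
        (by linarith [le_max_left (pMoment μ p a) (pMoment μ p b),
          le_max_right (pMoment μ p a) (pMoment μ p b)])
  obtain ⟨b, hb⟩ := hrefl.exists_forall_le (continuous_pMoment hp₀.le h₀).lowerSemicontinuous
    hquasi (isBounded_setOf_pMoment_le hp₀ h₀)
    ⟨0, forall_mem_range.2 fun y => integral_nonneg fun x => by positivity⟩
  refine ⟨⟨b, hb⟩, fun ⟨hp₁, hstrict⟩ => ⟨b, hb, fun b' hb' => ?_⟩⟩
  exact eq_of_forall_le_of_midpoint_lt hstrict.1
    (fun a a' m haa' hm => pMoment_midpoint_lt hstrict hp₁ h₀ haa' hm) hb' hb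

/-- Existence of `p`-barycenters on complete `p`-convex reflexive spaces,
and uniqueness under strict `p`-convexity for `p ∈ (1,∞)`. -/
theorem pBarycenter_exists (X : Type) [MetricSpace X] [CompleteSpace X]
    [MeasurableSpace X] [BorelSpace X] (p : ℝ) (hp : 1 ≤ p)
    (hconv : PConvexR X p) (hrefl : MetricReflexive X)
    (μ : Measure X) [IsProbabilityMeasure μ]
    (hmom : ∃ x₀ : X, Integrable (fun x => dist x x₀ ^ p) μ) :
    (∃ b : X, ∀ y : X, ∫ x, dist x b ^ p ∂μ ≤ ∫ x, dist x y ^ p ∂μ) ∧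
    ((1 < p ∧ StrictlyPConvexR X p) →
      ∃! b : X, ∀ y : X, ∫ x, dist x b ^ p ∂μ ≤ ∫ x, dist x y ^ p ∂μ) :=
  pBarycenter_exists_general X p hp hconv hrefl μ hmom
end
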